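/- Let 1 ≤ p < ∞. If X* has the p-Gelfand-Phillips property, Y has the Schur property, and M is a closed subspace of L(X, Y), then M has the p-Gelfand-Phillips property. -/

import Mathlib

open Filter Topology Metric NormedSpace Bornology ENNReal

noncomputable section

section Defs
variable {X Y : Type*} [NormedAddCommGroup X] [NormedSpace ℝ X]
  [NormedAddCommGroup Y] [NormedSpace ℝ Y]

/-- A sequence `x` in `X` is weakly `p`-summable if `(f (x n))ₙ ∈ ℓ_p` for every
continuous linear functional `f`. -/
def WeaklyPSummable (p : ℝ≥0∞) (x : ℕ → X) : Prop :=
  ∀ f : StrongDual ℝ X, Memℓp (fun n => f (x n)) p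

/-- A sequence is norm null if its norms tend to `0`. -/
def NormNull (x : ℕ → X) : Prop :=
  Tendsto (fun n => ‖x n‖) atTop (𝓝 0)

/-- An operator is `p`-convergent if it maps weakly `p`-summable sequences to norm
null sequences. -/
def PConvergent (p : ℝ≥0∞) (T : X →L[ℝ] Y) : Prop :=
  ∀ x : ℕ → X, WeaklyPSummable p x → NormNull fun n => T (x n)

/-- The adjoint (dual) operator `T* : Y* → X*`, `g ↦ g ∘ T`. -/
def adjOp (T : X →L[ℝ] Y) : StrongDual ℝ Y →L[ℝ] StrongDual ℝ X :=
  (ContinuousLinearMap.compL ℝ X Y ℝ).flip T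

/-- Weak convergence of a sequence to a point. -/
def WeaklyConvTo (x : ℕ → X) (a : X) : Prop :=
  ∀ f : StrongDual ℝ X, Tendsto (fun n => f (x n)) atTop (𝓝 (f a))

/-- A sequence is weakly Cauchy if `(f (x n))` converges for every functional `f`. -/
def WeaklyCauchySeq (x : ℕ → X) : Prop :=
  ∀ f : StrongDual ℝ X, ∃ l : ℝ, Tendsto (fun n => f (x n)) atTop (𝓝 l)

/-- A set is relatively weakly compact iff every sequence in it has a subsequence
weakly convergent to a point of the space (sequential form, by Eberlein–Šmulian). -/
def RelWeaklyCompact (A : Set X) : Prop :=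
  ∀ x : ℕ → X, (∀ n, x n ∈ A) →
    ∃ (a : X) (φ : ℕ → ℕ), StrictMono φ ∧ WeaklyConvTo (fun k => x (φ k)) a

/-- A set is weakly precompact if every sequence in it has a weakly Cauchy subsequence. -/
def WeaklyPrecompact (A : Set X) : Prop :=
  ∀ x : ℕ → X, (∀ n, x n ∈ A) →
    ∃ φ : ℕ → ℕ, StrictMono φ ∧ WeaklyCauchySeq (fun k => x (φ k))

/-- A weakly compact operator: the image of the closed unit ball is relatively
weakly compact. -/
def WeaklyCompactOp (T : X →L[ℝ] Y) : Prop :=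
  RelWeaklyCompact (⇑T '' closedBall 0 1)

/-- A weakly precompact operator: the image of the closed unit ball is weakly
precompact. -/
def WeaklyPrecompactOp (T : X →L[ℝ] Y) : Prop :=
  WeaklyPrecompact (⇑T '' closedBall 0 1)

/-- `g n → 0` uniformly on `A`. -/
def UnifNullOn (g : ℕ → X → ℝ) (A : Set X) : Prop :=
  ∀ ε > (0 : ℝ), ∃ N, ∀ n ≥ N, ∀ a ∈ A, |g n a| ≤ ε

/-- A weakly-`p`-Dunford-Pettis subset of `X`: bounded, and every weakly `p`-summable
sequence in `X*` tends to `0` uniformly on it. -/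
def WeaklyPDP (p : ℝ≥0∞) (A : Set X) : Prop :=
  IsBounded A ∧
    ∀ f : ℕ → StrongDual ℝ X, WeaklyPSummable p f → UnifNullOn (fun n a => f n a) A

/-- A weakly-`p`-L-subset of `X*`: bounded, and every weakly `p`-summable sequence
in `X` tends to `0` uniformly on it. -/
def WeaklyPLSet (p : ℝ≥0∞) (A : Set (StrongDual ℝ X)) : Prop :=
  IsBounded A ∧
    ∀ x : ℕ → X, WeaklyPSummable p x → UnifNullOn (fun n g => g (x n)) A

/-- A weakly-`p`-Cauchy sequence. -/
def WeaklyPCauchy (p : ℝ≥0∞) (x : ℕ → X) : Prop :=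
  ∀ φ ψ : ℕ → ℕ, StrictMono φ → StrictMono ψ →
    WeaklyPSummable p fun k => x (φ k) - x (ψ k)

/-- A weakly-`p`-precompact set: every sequence in it has a weakly-`p`-Cauchy
subsequence. -/
def WeaklyPPrecompact (p : ℝ≥0∞) (A : Set X) : Prop :=
  ∀ x : ℕ → X, (∀ n, x n ∈ A) →
    ∃ φ : ℕ → ℕ, StrictMono φ ∧ WeaklyPCauchy p fun k => x (φ k)

/-- A weakly-`p`-precompact operator. -/
def WeaklyPPrecompactOp (p : ℝ≥0∞) (T : X →L[ℝ] Y) : Prop :=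
  WeaklyPPrecompact p (⇑T '' closedBall 0 1)

/-- A `w*`-null sequence of functionals. -/
def WStarNull (f : ℕ → StrongDual ℝ X) : Prop :=
  ∀ x : X, Tendsto (fun n => f n x) atTop (𝓝 0)

/-- A limited subset of `X`: every `w*`-null sequence in `X*` tends to `0`
uniformly on it. -/
def LimitedSet (A : Set X) : Prop :=
  ∀ f : ℕ → StrongDual ℝ X, WStarNull f → UnifNullOn (fun n a => f n a) A

/-- A weakly unconditionally convergent (wuc) series. -/
def WUC (x : ℕ → X) : Prop :=
  ∀ f : StrongDual ℝ X, Summable fun n => |f (x n)|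

/-- An unconditionally converging operator: maps wuc series to unconditionally
convergent series. -/
def UncondConverging (T : X →L[ℝ] Y) : Prop :=
  ∀ x : ℕ → X, WUC x → Summable fun n => T (x n)

/-- A `V*`-subset of `X`. -/
def VStarSet (A : Set X) : Prop :=
  IsBounded A ∧ ∀ f : ℕ → StrongDual ℝ X, WUC f → UnifNullOn (fun n a => f n a) A

/-- `w*`-to-`w` continuity of an operator `T : X* → Y`, in the equivalent algebraic
form: for every `g ∈ Y*` the functional `g ∘ T` on `X*` is given by evaluation at
a point of `X`. -/
def WStarToWCont (T : StrongDual ℝ X →L[ℝ] Y) : Prop :=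
  ∀ g : StrongDual ℝ Y, ∃ x : X, ∀ f : StrongDual ℝ X, g (T f) = f x

end Defs

section SpaceProps
variable (p : ℝ≥0∞) (X : Type*) [NormedAddCommGroup X] [NormedSpace ℝ X]

/-- The Gelfand-Phillips property: every limited subset is relatively compact. -/
def GPspace : Prop :=
  ∀ A : Set X, Bornology.IsBounded A → LimitedSet A → IsCompact (closure A)

/-- The `p`-Gelfand-Phillips property: every limited weakly `p`-summable sequence is
norm null. -/
def pGP : Prop :=
  ∀ x : ℕ → X, LimitedSet (Set.range x) → WeaklyPSummable p x → NormNull x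

/-- Property `RDP_p`: every weakly-`p`-L-subset of `X*` is relatively weakly compact. -/
def RDPp : Prop :=
  ∀ A : Set (StrongDual ℝ X), WeaklyPLSet p A → RelWeaklyCompact A

/-- The Schur property. -/
def SchurSpace : Prop :=
  ∀ (x : ℕ → X) (a : X), WeaklyConvTo x a → Tendsto x atTop (𝓝 a)

/-- Weak sequential completeness. -/
def WeaklySeqComplete : Prop :=
  ∀ x : ℕ → X, WeaklyCauchySeq x → ∃ a : X, WeaklyConvTo x a

/-- Pełczyński's property (V). -/
def PropertyV : Prop :=
  ∀ (Y : Type) [NormedAddCommGroup Y] [NormedSpace ℝ Y] [CompleteSpace Y],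
    ∀ T : X →L[ℝ] Y, UncondConverging T → WeaklyCompactOp T

/-- Property (V*). -/
def PropertyVStar : Prop :=
  ∀ A : Set X, VStarSet A → RelWeaklyCompact A

/-- Reflexivity of a normed space: the canonical embedding into the double dual is
surjective. -/
def ReflexiveSpace : Prop :=
  Function.Surjective (NormedSpace.inclusionInDoubleDual ℝ X)

end SpaceProps

section Embeds
/-- `Z` embeds isomorphically into `W`. -/
def EmbedsIn (Z W : Type*) [NormedAddCommGroup Z] [NormedSpace ℝ Z]
    [NormedAddCommGroup W] [NormedSpace ℝ W] : Prop :=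
  ∃ f : Z →L[ℝ] W, ∃ c > (0 : ℝ), ∀ z : Z, c * ‖z‖ ≤ ‖f z‖

end Embeds

/-! Let `(Tₙ)` be a limited weakly `p`-summable sequence in `M`. For each `g ∈ Y*` the map
`S ↦ g ∘ S` is an operator `M → X*`, so `(g ∘ Tₙ)` is limited and weakly `p`-summable in `X*`,
hence norm null. Choose unit vectors `xₙ` with `‖Tₙ‖ ≤ 2 ‖Tₙ xₙ‖`: then `|g (Tₙ xₙ)| ≤ ‖g ∘ Tₙ‖`,
so `(Tₙ xₙ)` is weakly null in `Y`, hence norm null by the Schur property, and so is `(Tₙ)`. -/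

section

variable {X Y Z : Type*} [NormedAddCommGroup X] [NormedSpace ℝ X]
  [NormedAddCommGroup Y] [NormedSpace ℝ Y] [NormedAddCommGroup Z] [NormedSpace ℝ Z]

theorem ContinuousLinearMap.exists_norm_le_one_and_opNorm_le_two_mul {𝕜 E F : Type*}
    [DenselyNormedField 𝕜] [NormedAddCommGroup E] [NormedSpace 𝕜 E]
    [SeminormedAddCommGroup F] [NormedSpace 𝕜 F] (T : E →L[𝕜] F) :
    ∃ x : E, ‖x‖ ≤ 1 ∧ ‖T‖ ≤ 2 * ‖T x‖ := by
  rcases (norm_nonneg T).eq_or_lt with hT | hT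
  · exact ⟨0, by simp [← hT]⟩
  · obtain ⟨x, hx, hTx⟩ := T.exists_lt_apply_of_lt_opNorm (half_lt_self hT)
    exact ⟨x, hx.le, by linarith⟩

theorem WeaklyPSummable.map {p : ℝ≥0∞} {x : ℕ → X} (hx : WeaklyPSummable p x)
    (L : X →L[ℝ] Z) : WeaklyPSummable p fun n => L (x n) :=
  fun f => hx (f.comp L)

theorem LimitedSet.image {A : Set X} (hA : LimitedSet A) (L : X →L[ℝ] Z) :
    LimitedSet (L '' A) := by
  intro f hf ε hε
  obtain ⟨N, hN⟩ := hA (fun n => (f n).comp L) (fun x => hf (L x)) ε hε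
  refine ⟨N, ?_⟩
  rintro n hn - ⟨a, ha, rfl⟩
  exact hN n hn a ha

theorem pGP.normNull_map {p : ℝ≥0∞} (hZ : pGP p Z) (L : X →L[ℝ] Z) {x : ℕ → X}
    (hlim : LimitedSet (Set.range x)) (hsum : WeaklyPSummable p x) :
    NormNull fun n => L (x n) :=
  hZ _ (Set.range_comp L x ▸ hlim.image L) (hsum.map L)

theorem SchurSpace.normNull_of_forall_normNull_comp (hY : SchurSpace Y)
    {T : ℕ → X →L[ℝ] Y} (hT : ∀ g : StrongDual ℝ Y, NormNull fun n => g.comp (T n)) :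
    NormNull T := by
  choose x hx1 hTx using fun n => (T n).exists_norm_le_one_and_opNorm_le_two_mul
  have hweak : WeaklyConvTo (fun n => T n (x n)) 0 := by
    intro g
    rw [map_zero, tendsto_zero_iff_norm_tendsto_zero]
    refine squeeze_zero (fun _ => norm_nonneg _) (fun n => ?_) (hT g)
    calc ‖g (T n (x n))‖ ≤ ‖g.comp (T n)‖ * ‖x n‖ := (g.comp (T n)).le_opNorm (x n)
      _ ≤ ‖g.comp (T n)‖ := mul_le_of_le_one_right (norm_nonneg _) (hx1 n)
  have hnorm : Tendsto (fun n => 2 * ‖T n (x n)‖) atTop (𝓝 0) := by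
    simpa using ((hY _ 0 hweak).norm).const_mul 2
  exact squeeze_zero (fun _ => norm_nonneg _) hTx hnorm

theorem SchurSpace.pGP_of_linearIsometry {p : ℝ≥0∞} (hY : SchurSpace Y)
    (hX : pGP p (StrongDual ℝ X)) (ι : Z →ₗᵢ[ℝ] X →L[ℝ] Y) : pGP p Z := by
  intro z hlim hsum
  have hcomp (g : StrongDual ℝ Y) : NormNull fun n => g.comp (ι (z n)) :=
    hX.normNull_map ((ContinuousLinearMap.compL ℝ X Y ℝ g).comp ι.toContinuousLinearMap)
      hlim hsum
  simpa only [NormNull, ι.norm_map] using hY.normNull_of_forall_normNull_comp hcomp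

end

theorem stmt_18_general {X Y : Type*} [NormedAddCommGroup X] [NormedSpace ℝ X]
    [NormedAddCommGroup Y] [NormedSpace ℝ Y]
    (p : ℝ≥0∞)
    (hX : pGP p (StrongDual ℝ X)) (hY : SchurSpace Y)
    (M : Submodule ℝ (X →L[ℝ] Y)) :
    pGP p ↥M :=
  hY.pGP_of_linearIsometry hX M.subtypeₗᵢ

/-- For `1 ≤ p < ∞`, if `X*` has the `p`-Gelfand-Phillips property,
`Y` has the Schur property, and `M` is a closed subspace of `L(X, Y)`, then `M` has
the `p`-Gelfand-Phillips property. -/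
theorem stmt_18 {X Y : Type*} [NormedAddCommGroup X] [NormedSpace ℝ X] [CompleteSpace X]
    [NormedAddCommGroup Y] [NormedSpace ℝ Y] [CompleteSpace Y]
    (p : ℝ≥0∞) (hp : 1 ≤ p) (hp' : p ≠ ⊤)
    (hX : pGP p (StrongDual ℝ X)) (hY : SchurSpace Y)
    (M : Submodule ℝ (X →L[ℝ] Y)) (hMc : IsClosed (M : Set (X →L[ℝ] Y))) :
    pGP p ↥M :=
  stmt_18_general p hX hY M
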